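/- Let h : ℝⁿ → ℝ ∪ {∞} be a proper polyhedral convex function with dom h ⊆ ℝⁿ₊, let x̄ ∈ dom h with ∂h(x̄) ≠ ∅, and let I = {i : x̄ᵢ ≠ 0}. Then the linear subspace S_I := {z ∈ ℝⁿ : z_I = 0} is contained in the parallel subspace par(∂h(x̄)) := aff(∂h(x̄)) − v for any v ∈ ∂h(x̄). -/

import Mathlib

open scoped RealInnerProductSpace

/-- Convex subdifferential of an extended-real-valued function. -/
noncomputable def ESub {n : ℕ} (g : EuclideanSpace ℝ (Fin n) → EReal)
    (x : EuclideanSpace ℝ (Fin n)) : Set (EuclideanSpace ℝ (Fin n)) :=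
  {v | ∀ z, g x + ((⟪v, z - x⟫ : ℝ) : EReal) ≤ g z}

def EProper {n : ℕ} (g : EuclideanSpace ℝ (Fin n) → EReal) : Prop :=
  (∃ x, g x ≠ ⊤) ∧ ∀ x, g x ≠ ⊥

/-- A function is polyhedral iff its epigraph is an intersection of finitely many
closed halfspaces of `ℝⁿ × ℝ`. -/
def IsPolyhedralFn {n : ℕ} (g : EuclideanSpace ℝ (Fin n) → EReal) : Prop :=
  ∃ (m : ℕ) (a : Fin m → EuclideanSpace ℝ (Fin n)) (r b : Fin m → ℝ),
    {p : EuclideanSpace ℝ (Fin n) × ℝ | g p.1 ≤ (p.2 : EReal)} =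
      {p : EuclideanSpace ℝ (Fin n) × ℝ | ∀ i, ⟪a i, p.1⟫ + r i * p.2 ≤ b i}

/-! Every direction `w` normal to `dom h` at `x̄`, i.e. `⟪w, y - x̄⟫ ≤ 0` on `dom h`, is a
recession direction of `∂h(x̄)`. Since `dom h ⊆ ℝⁿ₊`, this applies to every `w ≤ 0` vanishing on
`I`, and these cones span `S_I`: a vector of `S_I` is the difference of the negative parts of
itself and of its opposite. Hence `v + S_I ⊆ aff ∂h(x̄)`. -/

theorem mem_affineSpan_add_sub {k V : Type*} [Ring k] [AddCommGroup V] [Module k V]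
    {s : Set V} {v a b : V} (hv : v ∈ s) (ha : v + a ∈ s) (hb : v + b ∈ s) :
    v + (a - b) ∈ affineSpan k s := by
  have hdir : (v + a) - (v + b) ∈ (affineSpan k s).direction :=
    AffineSubspace.vsub_mem_direction (subset_affineSpan k s ha) (subset_affineSpan k s hb)
  rw [add_sub_add_left_eq_sub] at hdir
  simpa [add_comm] using AffineSubspace.vadd_mem_of_mem_direction hdir (subset_affineSpan k s hv)

theorem add_mem_ESub_of_inner_nonpos {n : ℕ} {g : EuclideanSpace ℝ (Fin n) → EReal}
    {x v w : EuclideanSpace ℝ (Fin n)} (hv : v ∈ ESub g x)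
    (hw : ∀ y, g y ≠ ⊤ → ⟪w, y - x⟫ ≤ 0) : v + w ∈ ESub g x := by
  intro y
  by_cases hy : g y = ⊤
  · simp [hy]
  calc g x + ((⟪v + w, y - x⟫ : ℝ) : EReal)
      ≤ g x + ((⟪v, y - x⟫ : ℝ) : EReal) := by
        gcongr
        rw [inner_add_left]
        linarith [hw y hy]
    _ ≤ g y := hv y

section Orthant

variable {ι : Type*}

theorem inner_sub_nonpos_of_nonneg [Fintype ι] {x y w : EuclideanSpace ℝ ι} (hy : ∀ i, 0 ≤ y i)
    (hw : ∀ i, w i ≤ 0) (hwx : ∀ i, x i ≠ 0 → w i = 0) : ⟪w, y - x⟫ ≤ 0 := by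
  rw [PiLp.inner_apply]
  refine Finset.sum_nonpos fun i _ => ?_
  by_cases hxi : x i = 0
  · simpa [hxi, mul_comm] using mul_nonpos_of_nonpos_of_nonneg (hw i) (hy i)
  · simp [hwx i hxi]

noncomputable def negPartLp (z : EuclideanSpace ℝ ι) : EuclideanSpace ℝ ι :=
  WithLp.toLp 2 fun i => min (z i) 0

theorem negPartLp_nonpos (z : EuclideanSpace ℝ ι) (i : ι) : negPartLp z i ≤ 0 :=
  min_le_right _ _

theorem negPartLp_apply_eq_zero {z : EuclideanSpace ℝ ι} {i : ι} (hz : z i = 0) :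
    negPartLp z i = 0 := by
  simp [negPartLp, hz]

theorem negPartLp_sub_negPartLp_neg (z : EuclideanSpace ℝ ι) :
    negPartLp z - negPartLp (-z) = z := by
  ext i
  simp only [negPartLp, PiLp.sub_apply, PiLp.neg_apply]
  rcases le_total (z i) 0 with hz | hz <;> simp [hz]

end Orthant

theorem stmt5_general {n : ℕ} (h : EuclideanSpace ℝ (Fin n) → EReal)
    (hdom : ∀ x, h x ≠ ⊤ → ∀ i, 0 ≤ x i)
    (xbar : EuclideanSpace ℝ (Fin n))
    (v : EuclideanSpace ℝ (Fin n)) (hv : v ∈ ESub h xbar)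
    (z : EuclideanSpace ℝ (Fin n)) (hz : ∀ i, xbar i ≠ 0 → z i = 0) :
    v + z ∈ (affineSpan ℝ (ESub h xbar) : Set (EuclideanSpace ℝ (Fin n))) := by
  have hrec : ∀ u : EuclideanSpace ℝ (Fin n), (∀ i, xbar i ≠ 0 → u i = 0) →
      v + negPartLp u ∈ ESub h xbar := fun u hu =>
    add_mem_ESub_of_inner_nonpos hv fun y hy =>
      inner_sub_nonpos_of_nonneg (hdom y hy) (negPartLp_nonpos u)
        fun i hi => negPartLp_apply_eq_zero (hu i hi)
  rw [← negPartLp_sub_negPartLp_neg z]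
  exact mem_affineSpan_add_sub hv (hrec z hz) (hrec (-z) fun i hi => by simp [hz i hi])

/-- for a proper polyhedral `h` with `dom h ⊆ ℝⁿ₊`, `x̄ ∈ dom h`,
`I = {i : x̄ᵢ ≠ 0}`, the subspace `S_I = {z : z_I = 0}` lies in the parallel subspace
of `∂h(x̄)`, i.e. `v + S_I ⊆ aff(∂h(x̄))` for every `v ∈ ∂h(x̄)`. -/
theorem stmt5 {n : ℕ} (h : EuclideanSpace ℝ (Fin n) → EReal)
    (hproper : EProper h) (hpoly : IsPolyhedralFn h)
    (hdom : ∀ x, h x ≠ ⊤ → ∀ i, 0 ≤ x i)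
    (xbar : EuclideanSpace ℝ (Fin n)) (hxbar : h xbar ≠ ⊤)
    (hne : (ESub h xbar).Nonempty)
    (v : EuclideanSpace ℝ (Fin n)) (hv : v ∈ ESub h xbar)
    (z : EuclideanSpace ℝ (Fin n)) (hz : ∀ i, xbar i ≠ 0 → z i = 0) :
    v + z ∈ (affineSpan ℝ (ESub h xbar) : Set (EuclideanSpace ℝ (Fin n))) :=
  stmt5_general h hdom xbar v hv z hz
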